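/- arXiv:math/0109101 — 2 statements merged into one kernel-verified Lean document; each statement's English description precedes it below -/
import Mathlib

section
/- Let R be a set of infinite partitions of ℕ and let M_R be the union of all dual Ellentuck neighborhoods [t,Z]_m such that R ∩ [t,Z]_m is meager with respect to the dual Ellentuck topology. Then the set R ∪ (complement of M_R in the infinite partitions) has the Baire property with respect to the dual Ellentuck topology. -/
/-- The set of infinite partitions of ℕ, identified with equivalence relations
on ℕ with infinite quotient. -/
abbrev InfPart := {X : Setoid ℕ // Infinite (Quotient X)}

/-- The dual Ellentuck neighborhood `[s,X]_n`: all infinite partitions `Y` such that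
`s` is an `n`-segment of `Y` and `Y` is coarser than `X`. -/
def nbhd (n : ℕ) (s : ℕ → ℕ → Prop) (X : InfPart) : Set InfPart :=
  {Y | (∀ i < n, ∀ j < n, (s i j ↔ Y.1.r i j)) ∧ ∀ a b, X.1.r a b → Y.1.r a b}

/-- The condition for `[s,X]_n` to be a (nonempty-typed) dual Ellentuck neighborhood:
`∀ i j < n, X.r i j → s i j`. -/
def IsNbhd (n : ℕ) (s : ℕ → ℕ → Prop) (X : InfPart) : Prop :=
  ∀ i < n, ∀ j < n, (X.1.r i j → s i j)


/-- The dual Ellentuck topology, generated by the dual Ellentuck neighborhoods. -/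
instance dualEllentuck : TopologicalSpace InfPart :=
  TopologicalSpace.generateFrom
    {U | ∃ (n : ℕ) (s : ℕ → ℕ → Prop) (X : InfPart), IsNbhd n s X ∧ U = nbhd n s X}


/-- The union of all dual Ellentuck neighborhoods in which R is meager. -/
def MR (R : Set InfPart) : Set InfPart :=
  {Y | ∃ (m : ℕ) (t : ℕ → ℕ → Prop) (Z : InfPart),
    IsNbhd m t Z ∧ IsMeagre (R ∩ nbhd m t Z) ∧ Y ∈ nbhd m t Z}

/-!
The neighborhoods `[t,Z]_m` in which `R` is meager are open, so `MR R` is open, and by the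
Banach category theorem `R ∩ MR R` is meager. Hence `R ∪ (MR R)ᶜ` is the union of the closed set
`(MR R)ᶜ` and the meager set `R ∩ MR R`.

For the Banach category theorem, take by Zorn a maximal pairwise disjoint family `M` of open sets
each inside some member of `𝒰`. Maximality makes `⋃₀ M` dense in `⋃₀ 𝒰`, so `A ∩ ⋃₀ 𝒰` is covered
by `A ∩ ⋃₀ M` and the nowhere dense frontier of `⋃₀ M`. Writing each `A ∩ V` (`V ∈ M`) as a
countable union of nowhere dense sets `f V k ⊆ V`, disjointness of `M` makes each `⋃ V ∈ M, f V k`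
nowhere dense.
-/

open Set Topology

section BanachCategory

variable {α : Type*} [TopologicalSpace α]

lemma IsMeagre.exists_isNowhereDense_cover {s : Set α} (hs : IsMeagre s) :
    ∃ f : ℕ → Set α, (∀ k, IsNowhereDense (f k)) ∧ s ⊆ ⋃ k, f k := by
  obtain ⟨S, hSnd, hSc, hsS⟩ := isMeagre_iff_countable_union_isNowhereDense.1 hs
  obtain ⟨f, hf⟩ := (hSc.insert ∅).exists_eq_range (insert_nonempty _ _)
  refine ⟨f, fun k => ?_, ?_⟩
  · rcases (hf ▸ mem_range_self k : f k ∈ insert ∅ S) with h | h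
    · exact h ▸ isNowhereDense_empty
    · exact hSnd _ h
  · rw [← sUnion_range, ← hf]
    exact hsS.trans (sUnion_mono (subset_insert _ _))

lemma IsOpen.isNowhereDense_frontier {s : Set α} (hs : IsOpen s) : IsNowhereDense (frontier s) := by
  rw [isClosed_frontier.isNowhereDense_iff, ← frontier_compl]
  exact interior_frontier hs.isClosed_compl

lemma isNowhereDense_biUnion_inter_of_pairwiseDisjoint {M : Set (Set α)}
    (hMo : ∀ V ∈ M, IsOpen V) (hMd : M.PairwiseDisjoint id) {f : Set α → Set α}
    (hf : ∀ V ∈ M, IsNowhereDense (f V)) : IsNowhereDense (⋃ V ∈ M, f V ∩ V) := by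
  set N := ⋃ V ∈ M, f V ∩ V
  rw [IsNowhereDense, eq_empty_iff_forall_notMem]
  intro x hx
  obtain ⟨y, hyO, hyN⟩ := mem_closure_iff.1 (interior_subset hx) _ isOpen_interior hx
  obtain ⟨V, hV, -, hyV⟩ := mem_iUnion₂.1 hyN
  have hNV : V ∩ N ⊆ f V := by
    rintro z ⟨hzV, hzN⟩
    obtain ⟨W, hW, hzf, hzW⟩ := mem_iUnion₂.1 hzN
    obtain rfl : W = V := hMd.elim hW hV (not_disjoint_iff.2 ⟨z, hzW, hzV⟩)
    exact hzf
  have hsub : interior (closure N) ∩ V ⊆ interior (closure (f V)) := by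
    refine interior_maximal ?_ (isOpen_interior.inter (hMo V hV))
    calc interior (closure N) ∩ V ⊆ closure N ∩ V := inter_subset_inter_left _ interior_subset
      _ ⊆ closure (N ∩ V) := (hMo V hV).closure_inter
      _ ⊆ closure (f V) := closure_mono (inter_comm N V ▸ hNV)
  rw [hf V hV] at hsub
  exact hsub ⟨hyO, hyV⟩

lemma isMeagre_inter_sUnion_of_pairwiseDisjoint {A : Set α} {M : Set (Set α)}
    (hMo : ∀ V ∈ M, IsOpen V) (hMd : M.PairwiseDisjoint id) (hm : ∀ V ∈ M, IsMeagre (A ∩ V)) :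
    IsMeagre (A ∩ ⋃₀ M) := by
  choose! f hfnd hfA using fun V hV => (hm V hV).exists_isNowhereDense_cover
  have hN k : IsNowhereDense (⋃ V ∈ M, f V k ∩ V) :=
    isNowhereDense_biUnion_inter_of_pairwiseDisjoint hMo hMd fun V hV => hfnd V hV k
  refine (isMeagre_iUnion fun k => (hN k).isMeagre).mono ?_
  rintro z ⟨hzA, V, hV, hzV⟩
  obtain ⟨k, hk⟩ := mem_iUnion.1 (hfA V hV ⟨hzA, hzV⟩)
  exact mem_iUnion.2 ⟨k, mem_iUnion₂.2 ⟨V, hV, hk, hzV⟩⟩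

lemma exists_pairwiseDisjoint_refinement_dense (𝒰 : Set (Set α)) (hU : ∀ U ∈ 𝒰, IsOpen U) :
    ∃ M : Set (Set α), (∀ V ∈ M, IsOpen V ∧ ∃ U ∈ 𝒰, V ⊆ U) ∧ M.PairwiseDisjoint id ∧
      ⋃₀ 𝒰 ⊆ closure (⋃₀ M) := by
  set P : Set (Set (Set α)) := {M | (∀ V ∈ M, IsOpen V ∧ ∃ U ∈ 𝒰, V ⊆ U) ∧ M.PairwiseDisjoint id}
  obtain ⟨M, hMmax⟩ : ∃ M, Maximal (· ∈ P) M := by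
    refine zorn_subset P fun c hcP hc => ⟨⋃₀ c, ⟨?_, ?_⟩, fun _ => subset_sUnion_of_mem⟩
    · rintro V ⟨m, hm, hV⟩
      exact (hcP hm).1 V hV
    · exact (hc.pairwiseDisjoint_sUnion id).2 fun m hm => (hcP hm).2
  obtain ⟨hMsub, hMd⟩ := hMmax.1
  refine ⟨M, hMsub, hMd, ?_⟩
  rintro x ⟨U, hU𝒰, hxU⟩
  by_contra hx
  set W := U \ closure (⋃₀ M)
  have hWP : insert W M ∈ P := by
    refine ⟨?_, hMd.insert fun V hV _ => ?_⟩
    · rintro V (rfl | hV)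
      · exact ⟨(hU U hU𝒰).sdiff isClosed_closure, U, hU𝒰, sdiff_subset⟩
      · exact hMsub V hV
    · exact disjoint_sdiff_left.mono_right ((subset_sUnion_of_mem hV).trans subset_closure)
  have hWM : W ∈ M := hMmax.2 hWP (subset_insert W M) (mem_insert W M)
  exact hx (subset_closure ⟨W, hWM, hxU, hx⟩)

/-- Banach category theorem. -/
theorem isMeagre_inter_sUnion_of_isOpen {A : Set α} {𝒰 : Set (Set α)}
    (hU : ∀ U ∈ 𝒰, IsOpen U) (hm : ∀ U ∈ 𝒰, IsMeagre (A ∩ U)) : IsMeagre (A ∩ ⋃₀ 𝒰) := by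
  obtain ⟨M, hMsub, hMd, hdense⟩ := exists_pairwiseDisjoint_refinement_dense 𝒰 hU
  have hMo : IsOpen (⋃₀ M) := isOpen_sUnion fun V hV => (hMsub V hV).1
  have hAM : IsMeagre (A ∩ ⋃₀ M) :=
    isMeagre_inter_sUnion_of_pairwiseDisjoint (fun V hV => (hMsub V hV).1) hMd fun V hV => by
      obtain ⟨-, U, hU𝒰, hVU⟩ := hMsub V hV
      exact (hm U hU𝒰).mono (inter_subset_inter_right A hVU)
  refine (hAM.union hMo.isNowhereDense_frontier.isMeagre).mono ?_
  rintro z ⟨hzA, hz⟩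
  by_cases hzM : z ∈ ⋃₀ M
  · exact Or.inl ⟨hzA, hzM⟩
  · exact Or.inr (hMo.frontier_eq ▸ ⟨hdense hz, hzM⟩)

lemma baireMeasurableSet_union_compl_of_isMeagre_inter {A U : Set α} (hU : IsOpen U)
    (hAU : IsMeagre (A ∩ U)) : BaireMeasurableSet (A ∪ Uᶜ) := by
  have h : A ∪ Uᶜ = Uᶜ ∪ (A ∩ U) := by
    ext x
    by_cases hx : x ∈ U <;> simp [hx]
  rw [h]
  exact hU.baireMeasurableSet.compl.union hAU.baireMeasurableSet

end BanachCategory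

lemma isOpen_nbhd {n : ℕ} {s : ℕ → ℕ → Prop} {X : InfPart} (h : IsNbhd n s X) :
    IsOpen (nbhd n s X) :=
  TopologicalSpace.GenerateOpen.basic _ ⟨n, s, X, h, rfl⟩

def meagreNbhds (R : Set InfPart) : Set (Set InfPart) :=
  {U | ∃ m t Z, IsNbhd m t Z ∧ IsMeagre (R ∩ nbhd m t Z) ∧ U = nbhd m t Z}

lemma isOpen_of_mem_meagreNbhds {R U : Set InfPart} (hU : U ∈ meagreNbhds R) : IsOpen U := by
  obtain ⟨m, t, Z, hN, -, rfl⟩ := hU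
  exact isOpen_nbhd hN

lemma isMeagre_inter_of_mem_meagreNbhds {R U : Set InfPart} (hU : U ∈ meagreNbhds R) :
    IsMeagre (R ∩ U) := by
  obtain ⟨m, t, Z, -, hR, rfl⟩ := hU
  exact hR

lemma sUnion_meagreNbhds (R : Set InfPart) : ⋃₀ meagreNbhds R = MR R := by
  ext Y
  constructor
  · rintro ⟨_, ⟨m, t, Z, hN, hR, rfl⟩, hY⟩
    exact ⟨m, t, Z, hN, hR, hY⟩
  · rintro ⟨m, t, Z, hN, hR, hY⟩
    exact ⟨_, ⟨m, t, Z, hN, hR, rfl⟩, hY⟩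

/-- The set R ∪ (M_R)ᶜ has the Baire property in the dual Ellentuck topology. -/
theorem baireMeasurable_union_compl_MR (R : Set InfPart) :
    BaireMeasurableSet (R ∪ (MR R)ᶜ) := by
  have hU : ∀ U ∈ meagreNbhds R, IsOpen U := fun _ => isOpen_of_mem_meagreNbhds
  rw [← sUnion_meagreNbhds]
  exact baireMeasurableSet_union_compl_of_isMeagre_inter (isOpen_sUnion hU)
    (isMeagre_inter_sUnion_of_isOpen hU fun _ => isMeagre_inter_of_mem_meagreNbhds)
end

section
/- For every symmetric function π : ℕ → ℕ → Bool and every infinite partition Y of ℕ, there exists an infinite partition X of ℕ coarser than Y such that π is constant on pairs of distinct nonzero elements of Min(X): there is c : Bool with π n m = c for all n, m ∈ Min(X) with n ≠ m, n ≠ 0 and m ≠ 0. (This is the density claim, via Ramsey's theorem, in the proof of the paper's Fact 2.3 that the generic object yields a Ramsey ultrafilter.) -/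
/-- A partition Y is coarser than X. -/
def Coarser (Y X : Setoid ℕ) : Prop := ∀ n m, X.r n m → Y.r n m

/-- Min(X): the set of least elements of the blocks of X. -/
def MinSet (X : Setoid ℕ) : Set ℕ := {k | ∀ m, X.r k m → k ≤ m}

/-!
By the infinite Ramsey theorem for pairs, the infinite set `Min(Y)` of block minima of `Y`
contains an infinite homogeneous set `H`. Merging every block of `Y` whose minimum is not in `H`
into the block of `0` gives an infinite partition coarser than `Y` all of whose nonzero block
minima lie in `H`.
-/

namespace Ramsey

variable {κ : Type*} [Finite κ] (π : ℕ → ℕ → κ)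

theorem exists_color_infinite {T : Set ℕ} (hT : T.Infinite) (a : ℕ) :
    ∃ c, {x ∈ T | a < x ∧ π a x = c}.Infinite := by
  by_contra! h
  have hfin : {x ∈ T | a < x}.Finite :=
    (Set.finite_iUnion h).subset fun x hx => Set.mem_iUnion.2 ⟨π a x, hx.1, hx.2, rfl⟩
  exact hT.sdiff (Set.finite_Iic a) (hfin.subset fun x hx => ⟨hx.1, not_le.1 hx.2⟩)

/- Each step keeps, above the least element `a` of `T`, an infinite class of one color of `π a`;
so along the chain, the color of a pair of least elements depends only on the earlier one. -/
noncomputable def color (T : {T : Set ℕ // T.Infinite}) : κ :=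
  (exists_color_infinite π T.2 (sInf T.1)).choose

noncomputable def step (T : {T : Set ℕ // T.Infinite}) : {T : Set ℕ // T.Infinite} :=
  ⟨{x ∈ T.1 | sInf T.1 < x ∧ π (sInf T.1) x = color π T},
    (exists_color_infinite π T.2 (sInf T.1)).choose_spec⟩

noncomputable def chain (T₀ : {T : Set ℕ // T.Infinite}) (n : ℕ) : {T : Set ℕ // T.Infinite} :=
  (step π)^[n] T₀

variable (T₀ : {T : Set ℕ // T.Infinite})

theorem chain_succ (n : ℕ) : chain π T₀ (n + 1) = step π (chain π T₀ n) :=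
  Function.iterate_succ_apply' _ _ _

theorem chain_antitone : Antitone fun n => (chain π T₀ n).1 :=
  antitone_nat_of_succ_le fun n => by
    rw [chain_succ]
    exact fun x hx => hx.1

theorem sInf_chain_mem (n : ℕ) : sInf (chain π T₀ n).1 ∈ (chain π T₀ n).1 :=
  Nat.sInf_mem (chain π T₀ n).2.nonempty

theorem sInf_chain_lt_and_color_eq {n m : ℕ} (h : n < m) :
    sInf (chain π T₀ n).1 < sInf (chain π T₀ m).1 ∧
      π (sInf (chain π T₀ n).1) (sInf (chain π T₀ m).1) = color π (chain π T₀ n) := by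
  have hm : sInf (chain π T₀ m).1 ∈ (chain π T₀ (n + 1)).1 :=
    chain_antitone π T₀ h (sInf_chain_mem π T₀ m)
  rw [chain_succ] at hm
  exact hm.2

end Ramsey

open Ramsey in
/-- The infinite Ramsey theorem for pairs, with finitely many colors. -/
theorem Set.Infinite.exists_homogeneous_subset {κ : Type*} [Finite κ] (π : ℕ → ℕ → κ)
    {S : Set ℕ} (hS : S.Infinite) :
    ∃ H ⊆ S, H.Infinite ∧ ∃ c, ∀ n ∈ H, ∀ m ∈ H, n < m → π n m = c := by
  let T₀ : {T : Set ℕ // T.Infinite} := ⟨S, hS⟩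
  let a : ℕ → ℕ := fun n => sInf (chain π T₀ n).1
  have ha : StrictMono a :=
    strictMono_nat_of_lt_succ fun n => (sInf_chain_lt_and_color_eq π T₀ n.lt_succ_self).1
  obtain ⟨c, hc⟩ := Finite.exists_infinite_fiber fun n => color π (chain π T₀ n)
  refine ⟨a '' _, ?_, (Set.infinite_coe_iff.1 hc).image ha.injective.injOn, c, ?_⟩
  · rintro _ ⟨n, -, rfl⟩
    exact chain_antitone π T₀ n.zero_le (sInf_chain_mem π T₀ n)
  · rintro _ ⟨i, hi, rfl⟩ _ ⟨j, -, rfl⟩ hij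
    exact (sInf_chain_lt_and_color_eq π T₀ (ha.lt_iff_lt.1 hij)).2.trans hi

section Partition

variable (Y : Setoid ℕ)

noncomputable def blockMin (n : ℕ) : ℕ := sInf {m | Y.r n m}

variable {Y}

theorem rel_blockMin (n : ℕ) : Y.r n (blockMin Y n) := Nat.sInf_mem ⟨n, Y.refl n⟩

theorem blockMin_le_of_rel {n m : ℕ} (h : Y.r n m) : blockMin Y n ≤ m := Nat.sInf_le h

theorem blockMin_eq_of_rel {n m : ℕ} (h : Y.r n m) : blockMin Y n = blockMin Y m := by
  simp only [blockMin]
  congr 1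
  ext k
  exact ⟨Y.trans (Y.symm h), Y.trans h⟩

theorem blockMin_blockMin (n : ℕ) : blockMin Y (blockMin Y n) = blockMin Y n :=
  (blockMin_eq_of_rel (rel_blockMin n)).symm

theorem blockMin_zero : blockMin Y 0 = 0 := Nat.le_zero.1 (blockMin_le_of_rel (Y.refl 0))

theorem blockMin_mem_minSet (n : ℕ) : blockMin Y n ∈ MinSet Y :=
  fun _ hm => blockMin_le_of_rel (Y.trans (rel_blockMin n) hm)

theorem blockMin_eq_self_iff {k : ℕ} : blockMin Y k = k ↔ k ∈ MinSet Y :=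
  ⟨fun h => h ▸ blockMin_mem_minSet k,
    fun h => le_antisymm (blockMin_le_of_rel (Y.refl k)) (h _ (rel_blockMin k))⟩

theorem infinite_minSet [Infinite (Quotient Y)] : (MinSet Y).Infinite := by
  refine Set.infinite_of_injective_forall_mem (f := Quotient.lift (blockMin Y)
    fun _ _ => blockMin_eq_of_rel) ?_ (Quotient.ind blockMin_mem_minSet)
  refine Quotient.ind₂ fun a b (h : blockMin Y a = blockMin Y b) => Quotient.sound ?_
  exact Y.trans (rel_blockMin a) (h ▸ Y.symm (rel_blockMin b))

variable (Y) (H : Set ℕ)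

noncomputable def collapseMap (n : ℕ) : ℕ := H.indicator id (blockMin Y n)

variable {Y H}

theorem coarser_ker_collapseMap : Coarser (Setoid.ker (collapseMap Y H)) Y := fun _ _ h =>
  congrArg (H.indicator id) (blockMin_eq_of_rel h)

theorem collapseMap_blockMin (n : ℕ) : collapseMap Y H (blockMin Y n) = collapseMap Y H n := by
  rw [collapseMap, blockMin_blockMin, collapseMap]

theorem collapseMap_zero : collapseMap Y H 0 = 0 := by
  rw [collapseMap, blockMin_zero, Set.indicator_apply_eq_zero]
  exact fun _ => rfl

theorem collapseMap_of_mem (hHY : H ⊆ MinSet Y) {h : ℕ} (hh : h ∈ H) : collapseMap Y H h = h := by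
  rw [collapseMap, blockMin_eq_self_iff.2 (hHY hh), Set.indicator_of_mem hh, id]

theorem infinite_quotient_ker_collapseMap (hHY : H ⊆ MinSet Y) (hH : H.Infinite) :
    Infinite (Quotient (Setoid.ker (collapseMap Y H))) := by
  have := hH.to_subtype
  refine Infinite.of_injective (fun h : H => (⟦h.1⟧ : Quotient (Setoid.ker (collapseMap Y H))))
    fun h₁ h₂ heq => Subtype.ext ?_
  have : collapseMap Y H h₁ = collapseMap Y H h₂ := Quotient.exact heq
  rwa [collapseMap_of_mem hHY h₁.2, collapseMap_of_mem hHY h₂.2] at this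

theorem mem_of_mem_minSet_ker_collapseMap {k : ℕ} (hk : k ∈ MinSet (Setoid.ker (collapseMap Y H)))
    (hk0 : k ≠ 0) : k ∈ H := by
  have hkY : blockMin Y k = k :=
    le_antisymm (blockMin_le_of_rel (Y.refl k)) (hk _ (collapseMap_blockMin k).symm)
  by_contra hkH
  have hk_rel_zero : collapseMap Y H k = collapseMap Y H 0 := by
    rw [collapseMap_zero, collapseMap, hkY, Set.indicator_of_notMem hkH]
  exact hk0 (Nat.le_zero.1 (hk 0 hk_rel_zero))

end Partition

/-- For every symmetric 2-coloring π and infinite partition Y there is an infinite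
partition X coarser than Y with π constant on distinct nonzero elements of Min(X). -/
theorem exists_coarser_homogeneous (π : ℕ → ℕ → Bool) (hsym : ∀ n m, π n m = π m n)
    (Y : InfPart) :
    ∃ X : InfPart, Coarser X.1 Y.1 ∧ ∃ c : Bool,
      ∀ n m, n ∈ MinSet X.1 → m ∈ MinSet X.1 → n ≠ m → n ≠ 0 → m ≠ 0 → π n m = c := by
  have := Y.2
  obtain ⟨H, hHY, hH, c, hc⟩ := (infinite_minSet (Y := Y.1)).exists_homogeneous_subset π
  refine ⟨⟨_, infinite_quotient_ker_collapseMap hHY hH⟩, coarser_ker_collapseMap, c, ?_⟩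
  intro n m hn hm hnm hn0 hm0
  have hnH := mem_of_mem_minSet_ker_collapseMap hn hn0
  have hmH := mem_of_mem_minSet_ker_collapseMap hm hm0
  rcases hnm.lt_or_gt with h | h
  · exact hc n hnH m hmH h
  · rw [hsym]
    exact hc m hmH n hnH h
end
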